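/- arXiv:2406.10002 — 2 statements merged into one kernel-verified Lean document; each statement's English description precedes it below -/
import Mathlib

section
/- Let σ be a 0-1 squashing function, K ⊆ ℝⁿ compact, and A, B disjoint closed subsets of K. For each ε > 0 there exists H ∈ N₃^σ (i.e., H = σ ∘ h with h ∈ N₃) such that 0 ≤ H < ε on B and 1 - ε < H ≤ 1 on A. -/
open Filter Topology

/-- A 0-1 squashing function: increasing, continuous, with limit 0 at -∞ and 1 at +∞. -/
def IsSquashing (σ : ℝ → ℝ) : Prop :=
  Monotone σ ∧ Continuous σ ∧
    Tendsto σ atBot (nhds 0) ∧ Tendsto σ atTop (nhds 1)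

/-- `Net σ n k f` means `f ∈ 𝒩_k`: `𝒩₁` is the affine functions on `ℝⁿ`, and
`𝒩_{k+1}` consists of affine combinations `a₀ + Σⱼ aⱼ σ(Fⱼ)` with `Fⱼ ∈ 𝒩_k`
(so the summands `σ ∘ Fⱼ` range over `𝒩_k^σ`). -/
inductive Net (σ : ℝ → ℝ) (n : ℕ) : ℕ → ((Fin n → ℝ) → ℝ) → Prop
  | affine (a₀ : ℝ) (a : Fin n → ℝ) : Net σ n 1 (fun x => a₀ + ∑ i, a i * x i)
  | comb (k m : ℕ) (F : Fin m → ((Fin n → ℝ) → ℝ)) (a₀ : ℝ) (a : Fin m → ℝ)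
      (hF : ∀ j, Net σ n k (F j)) :
      Net σ n (k + 1) (fun x => a₀ + ∑ j, a j * σ (F j x))

section Aux
variable {σ : ℝ → ℝ} {n : ℕ}

lemma squash_nonneg (hσ : IsSquashing σ) (t : ℝ) : 0 ≤ σ t :=
  hσ.1.le_of_tendsto hσ.2.2.1 t

lemma squash_le_one (hσ : IsSquashing σ) (t : ℝ) : σ t ≤ 1 :=
  hσ.1.ge_of_tendsto hσ.2.2.2 t

lemma squash_threshold (hσ : IsSquashing σ) {e : ℝ} (he : 0 < e) :
    ∃ T : ℝ, 0 < T ∧ (∀ t, T ≤ t → 1 - e < σ t) ∧ (∀ t, t ≤ -T → σ t < e) := by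
  obtain ⟨T1, hT1⟩ := eventually_atTop.1
    (hσ.2.2.2.eventually (eventually_gt_nhds (by linarith : (1:ℝ) - e < 1)))
  obtain ⟨T2, hT2⟩ := eventually_atBot.1 (hσ.2.2.1.eventually (eventually_lt_nhds he))
  have h1 : T1 ≤ max T1 (max (-T2) 1) := le_max_left _ _
  have h2 : -T2 ≤ max T1 (max (-T2) 1) := le_max_of_le_right (le_max_left _ _)
  have h3 : (1:ℝ) ≤ max T1 (max (-T2) 1) := le_max_of_le_right (le_max_right _ _)
  refine ⟨max T1 (max (-T2) 1), by linarith, fun t ht => hT1 t (by linarith),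
    fun t ht => hT2 t (by linarith)⟩

lemma net_affine_single (i : Fin n) (M c : ℝ) : Net σ n 1 (fun x => c + M * x i) := by
  have h : (fun x : Fin n → ℝ => c + M * x i)
      = fun x => c + ∑ k, (if k = i then M else 0) * x k := by
    funext x
    simp [ite_mul]
  rw [h]
  exact Net.affine c _

noncomputable def aff (n : ℕ) (M s : ℝ) (a : Fin n → ℝ) : Fin (n + n) → (Fin n → ℝ) → ℝ :=
  Fin.addCases (fun i x => M * (s - a i) + M * x i) (fun i x => M * (a i + s) + (-M) * x i)

lemma net_aff (M s : ℝ) (a : Fin n → ℝ) (j : Fin (n + n)) : Net σ n 1 (aff n M s a j) := by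
  refine Fin.addCases (motive := fun j => Net σ n 1 (aff n M s a j)) ?_ ?_ j
  · intro i
    simp only [aff, Fin.addCases_left]
    exact net_affine_single i M _
  · intro i
    simp only [aff, Fin.addCases_right]
    exact net_affine_single i (-M) _

noncomputable def cube (σ : ℝ → ℝ) (n : ℕ) (M M' s : ℝ) (a : Fin n → ℝ) : (Fin n → ℝ) → ℝ :=
  fun x => M' * (1/2 - ((n + n : ℕ) : ℝ)) + ∑ j : Fin (n + n), M' * σ (aff n M s a j x)

lemma net_cube (M M' s : ℝ) (a : Fin n → ℝ) : Net σ n 2 (cube σ n M M' s a) :=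
  Net.comb 1 (n+n) (aff n M s a) _ (fun _ => M') (fun j => net_aff M s a j)

lemma cube_eq (M M' s : ℝ) (a x : Fin n → ℝ) :
    cube σ n M M' s a x
      = M' * (1/2 - ((n + n : ℕ) : ℝ)) + M' * ∑ j : Fin (n + n), σ (aff n M s a j x) := by
  simp [cube, Finset.mul_sum]

lemma cube_large (hσ : IsSquashing σ) {η T M M' s : ℝ} {a x : Fin n → ℝ}
    (hT0 : 0 < T) (hη1 : 2*(n:ℝ)*η ≤ 1/4) (hM' : M' = 4*T)
    (hTt : ∀ t, T ≤ t → 1 - η < σ t)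
    (hin : ∀ j : Fin (n+n), T ≤ aff n M s a j x) :
    T ≤ cube σ n M M' s a x := by
  have hsum : ((n+n : ℕ) : ℝ) * (1 - η) ≤ ∑ j : Fin (n+n), σ (aff n M s a j x) := by
    have h := Finset.card_nsmul_le_sum Finset.univ (fun j => σ (aff n M s a j x)) (1 - η)
        (fun j _ => (hTt _ (hin j)).le)
    simpa [nsmul_eq_mul] using h
  rw [cube_eq, hM']
  push_cast at hsum ⊢
  nlinarith [mul_le_mul_of_nonneg_left hsum (by positivity : (0:ℝ) ≤ 4*T),
    mul_le_mul_of_nonneg_left hη1 (by positivity : (0:ℝ) ≤ 4*T)]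

lemma cube_small (hσ : IsSquashing σ) {η T M M' s : ℝ} {a x : Fin n → ℝ}
    (hT0 : 0 < T) (hη0 : 0 < η) (hη4 : η ≤ 1/4) (hM' : M' = 4*T)
    (hTb : ∀ t, t ≤ -T → σ t < η)
    (hout : ∃ j : Fin (n+n), aff n M s a j x ≤ -T) :
    cube σ n M M' s a x ≤ -T := by
  obtain ⟨j₀, hj₀⟩ := hout
  have hpos : 1 ≤ n + n := j₀.pos
  have hsum : ∑ j : Fin (n+n), σ (aff n M s a j x) ≤ η + (((n+n : ℕ) : ℝ) - 1) := by
    have hsplit := Finset.add_sum_erase Finset.univ (fun j => σ (aff n M s a j x))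
      (Finset.mem_univ j₀)
    have hrest : ∑ j ∈ Finset.univ.erase j₀, σ (aff n M s a j x) ≤ ((n+n : ℕ) : ℝ) - 1 := by
      have h1 := Finset.sum_le_card_nsmul (Finset.univ.erase j₀)
        (fun j => σ (aff n M s a j x)) 1 (fun j _ => squash_le_one hσ _)
      have hcard : (Finset.univ.erase j₀).card = (n+n) - 1 := by
        rw [Finset.card_erase_of_mem (Finset.mem_univ _), Finset.card_univ, Fintype.card_fin]
      rw [hcard, nsmul_eq_mul, mul_one, Nat.cast_sub hpos, Nat.cast_one] at h1
      exact h1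
    have hj : σ (aff n M s a j₀ x) ≤ η := (hTb _ hj₀).le
    calc ∑ j : Fin (n+n), σ (aff n M s a j x)
        = σ (aff n M s a j₀ x) + ∑ j ∈ Finset.univ.erase j₀, σ (aff n M s a j x) := hsplit.symm
      _ ≤ η + (((n+n : ℕ) : ℝ) - 1) := add_le_add hj hrest
  rw [cube_eq, hM']
  nlinarith [mul_le_mul_of_nonneg_left hsum (by positivity : (0:ℝ) ≤ 4*T),
    mul_le_mul_of_nonneg_left hη4 (by positivity : (0:ℝ) ≤ 4*T)]

end Aux

set_option maxHeartbeats 1000000 in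
theorem stmt9 (σ : ℝ → ℝ) (hσ : IsSquashing σ)
    (n : ℕ) (K : Set (Fin n → ℝ)) (hK : IsCompact K)
    (A B : Set (Fin n → ℝ)) (hAK : A ⊆ K) (hBK : B ⊆ K)
    (hA : IsClosed A) (hB : IsClosed B) (hAB : Disjoint A B)
    (ε : ℝ) (hε : 0 < ε) :
    ∃ h : (Fin n → ℝ) → ℝ, Net σ n 3 h ∧
      (∀ x ∈ B, 0 ≤ σ (h x) ∧ σ (h x) < ε) ∧
      (∀ x ∈ A, 1 - ε < σ (h x) ∧ σ (h x) ≤ 1) := by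
  have hAcomp : IsCompact A := hK.of_isClosed_subset hA hAK
  obtain ⟨δ, hδ, hdisj⟩ := hAB.exists_thickenings hAcomp hB
  have hfar : ∀ x ∈ B, ∀ a ∈ A, δ ≤ dist x a := by
    intro x hx a ha
    by_contra hlt
    push_neg at hlt
    exact Set.disjoint_left.1 hdisj (Metric.mem_thickening_iff.2 ⟨a, ha, hlt⟩)
      (Metric.self_subset_thickening hδ B hx)
  obtain ⟨tset, htA, htfin, htcov⟩ := hAcomp.elim_finite_subcover_image
    (c := fun a => Metric.ball a (δ/3)) (fun a _ => Metric.isOpen_ball)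
    (fun x hx => Set.mem_biUnion hx (Metric.mem_ball_self (by linarith : (0:ℝ) < δ/3)))
  set ts : Finset (Fin n → ℝ) := htfin.toFinset with hts
  set m : ℕ := ts.card with hm
  set e := ts.equivFin with he
  set cvec : Fin m → (Fin n → ℝ) := fun j => (e.symm j : Fin n → ℝ) with hcvec
  have hcvec_mem : ∀ j, cvec j ∈ A := fun j => htA (htfin.mem_toFinset.1 (e.symm j).2)
  -- choose η
  set η : ℝ := min (1/(8*(n:ℝ)+8)) (1/(4*(m:ℝ)+4)) with hηdef
  have hη0 : 0 < η := lt_min (by positivity) (by positivity)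
  have hη1 : 2*(n:ℝ)*η ≤ 1/4 := by
    have h2 : η ≤ 1/(8*(n:ℝ)+8) := min_le_left _ _
    rw [le_div_iff₀ (by positivity : (0:ℝ) < 8*(n:ℝ)+8)] at h2
    nlinarith [hη0.le, Nat.cast_nonneg (α := ℝ) n]
  have hη2 : (m:ℝ)*η ≤ 1/4 := by
    have h2 : η ≤ 1/(4*(m:ℝ)+4) := min_le_right _ _
    rw [le_div_iff₀ (by positivity : (0:ℝ) < 4*(m:ℝ)+4)] at h2
    nlinarith [hη0.le, Nat.cast_nonneg (α := ℝ) m]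
  have hη4 : η ≤ 1/4 := by
    have h2 : η ≤ 1/(8*(n:ℝ)+8) := min_le_left _ _
    have : 1/(8*(n:ℝ)+8) ≤ 1/8 := by
      apply one_div_le_one_div_of_le (by norm_num)
      nlinarith [Nat.cast_nonneg (α := ℝ) n]
    linarith
  obtain ⟨T, hT0, hTtop, hTbot⟩ := squash_threshold hσ hη0
  obtain ⟨T', hT'0, hT'top, hT'bot⟩ := squash_threshold hσ hε
  set M : ℝ := 6*T/δ with hM
  have hM0 : 0 < M := by rw [hM]; positivity
  have hMδ : M * (δ/6) = T := by rw [hM]; field_simp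
  -- points near a center: all affine pieces large
  have haff_in : ∀ (x a : Fin n → ℝ), dist x a < δ/3 → ∀ j, T ≤ aff n M (δ/2) a j x := by
    intro x a hxa j
    refine Fin.addCases (motive := fun j => T ≤ aff n M (δ/2) a j x) ?_ ?_ j
    · intro i
      simp only [aff, Fin.addCases_left]
      have hi : |x i - a i| < δ/3 := by
        rw [← Real.dist_eq]; exact lt_of_le_of_lt (dist_le_pi_dist x a i) hxa
      have h1 : δ/6 ≤ x i - a i + δ/2 := by
        have := (abs_lt.1 hi).1; linarith
      have := mul_le_mul_of_nonneg_left h1 hM0.le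
      linarith [hMδ, this]
    · intro i
      simp only [aff, Fin.addCases_right]
      have hi : |x i - a i| < δ/3 := by
        rw [← Real.dist_eq]; exact lt_of_le_of_lt (dist_le_pi_dist x a i) hxa
      have h1 : δ/6 ≤ a i - x i + δ/2 := by
        have := (abs_lt.1 hi).2; linarith
      have := mul_le_mul_of_nonneg_left h1 hM0.le
      nlinarith [hMδ, this]
  -- points of B: some affine piece very negative
  have haff_out : ∀ x ∈ B, ∀ a ∈ A, ∃ j, aff n M (δ/2) a j x ≤ -T := by
    intro x hx a ha
    have hd : ¬ dist x a < 2*δ/3 := by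
      have := hfar x hx a ha; intro h; linarith
    rw [dist_pi_lt_iff (by linarith : (0:ℝ) < 2*δ/3)] at hd
    push_neg at hd
    obtain ⟨i, hi⟩ := hd
    rw [Real.dist_eq] at hi
    rcases le_abs.1 hi with hcase | hcase
    · -- x i - a i ≥ 2δ/3 : use upper piece
      refine ⟨Fin.natAdd n i, ?_⟩
      simp only [aff, Fin.addCases_right]
      have h1 : a i + δ/2 - x i ≤ -(δ/6) := by linarith
      have h2 : a i - x i + δ/2 ≤ -(δ/6) := by linarith
      have := mul_le_mul_of_nonneg_left h2 hM0.le
      nlinarith [hMδ, this]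
    · -- a i - x i ≥ 2δ/3 : use lower piece
      refine ⟨Fin.castAdd n i, ?_⟩
      simp only [aff, Fin.addCases_left]
      have h2 : x i - a i + δ/2 ≤ -(δ/6) := by linarith
      have := mul_le_mul_of_nonneg_left h2 hM0.le
      nlinarith [hMδ, this]
  -- the level-3 network
  refine ⟨fun x => (4*T') * (-(1/2)) + ∑ j : Fin m, (4*T') * σ (cube σ n M (4*T) (δ/2) (cvec j) x),
    Net.comb 2 m _ _ (fun _ => 4*T') (fun j => net_cube M (4*T) (δ/2) (cvec j)), ?_, ?_⟩
  · -- on B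
    intro x hx
    have hterm : ∀ j : Fin m, σ (cube σ n M (4*T) (δ/2) (cvec j) x) ≤ η := fun j =>
      (hTbot _ (cube_small hσ hT0 hη0 hη4 rfl hTbot (haff_out x hx (cvec j) (hcvec_mem j)))).le
    have hsum : ∑ j : Fin m, σ (cube σ n M (4*T) (δ/2) (cvec j) x) ≤ (m:ℝ) * η := by
      have h1 := Finset.sum_le_card_nsmul Finset.univ
        (fun j : Fin m => σ (cube σ n M (4*T) (δ/2) (cvec j) x)) η (fun j _ => hterm j)
      rwa [Finset.card_univ, Fintype.card_fin, nsmul_eq_mul] at h1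
    have hrw : (4*T') * (-(1/2)) + ∑ j : Fin m, (4*T') * σ (cube σ n M (4*T) (δ/2) (cvec j) x)
        = (4*T') * (-(1/2)) + (4*T') * ∑ j : Fin m, σ (cube σ n M (4*T) (δ/2) (cvec j) x) := by
      rw [Finset.mul_sum]
    have hval : (4*T') * (-(1/2)) + ∑ j : Fin m, (4*T') * σ (cube σ n M (4*T) (δ/2) (cvec j) x)
        ≤ -T' := by
      rw [hrw]
      have h1 := mul_le_mul_of_nonneg_left hsum (by positivity : (0:ℝ) ≤ 4*T')
      have h2 := mul_le_mul_of_nonneg_left hη2 (by positivity : (0:ℝ) ≤ 4*T')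
      nlinarith [h1, h2]
    exact ⟨squash_nonneg hσ _, hT'bot _ hval⟩
  · -- on A
    intro x hx
    obtain ⟨a, ha, hxa⟩ : ∃ a, ∃ h : a ∈ ts, x ∈ Metric.ball a (δ/3) := by
      have hc := htcov hx
      simp only [Set.mem_iUnion] at hc
      obtain ⟨a, haA, hball⟩ := hc
      exact ⟨a, htfin.mem_toFinset.2 haA, hball⟩
    set j₀ : Fin m := e ⟨a, ha⟩ with hj₀
    have hc : cvec j₀ = a := by rw [hcvec]; simp [hj₀]
    have hG : 1 - η < σ (cube σ n M (4*T) (δ/2) (cvec j₀) x) := by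
      refine hTtop _ (cube_large hσ hT0 hη1 rfl hTtop ?_)
      rw [hc]
      exact haff_in x a (Metric.mem_ball.1 hxa) 
    have hsum : 1 - η ≤ ∑ j : Fin m, σ (cube σ n M (4*T) (δ/2) (cvec j) x) := by
      have h1 := Finset.single_le_sum
        (f := fun j : Fin m => σ (cube σ n M (4*T) (δ/2) (cvec j) x))
        (fun j _ => squash_nonneg hσ _) (Finset.mem_univ j₀)
      exact le_trans hG.le h1
    have hrw : (4*T') * (-(1/2)) + ∑ j : Fin m, (4*T') * σ (cube σ n M (4*T) (δ/2) (cvec j) x)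
        = (4*T') * (-(1/2)) + (4*T') * ∑ j : Fin m, σ (cube σ n M (4*T) (δ/2) (cvec j) x) := by
      rw [Finset.mul_sum]
    have hval : T' ≤ (4*T') * (-(1/2))
        + ∑ j : Fin m, (4*T') * σ (cube σ n M (4*T) (δ/2) (cvec j) x) := by
      rw [hrw]
      have h1 := mul_le_mul_of_nonneg_left hsum (by positivity : (0:ℝ) ≤ 4*T')
      have h2 := mul_le_mul_of_nonneg_left hη4 (by positivity : (0:ℝ) ≤ 4*T')
      nlinarith [h1, h2]
    exact ⟨hT'top _ hval, squash_le_one hσ _⟩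
end

section
/- Let σ be a 0-1 squashing function and K ⊆ ℝⁿ compact. For every continuous T : K → ℝᵐ and ε > 0, there exist f₁, …, f_m ∈ N₄ such that sup_{x∈K} ‖(f₁(x), …, f_m(x)) - T(x)‖ < ε (vector-valued universal approximation by three-hidden-layer networks). -/
/-!
On a compact interval a continuous function is uniformly close to a staircase with small
steps, and `σ (k ·)` approximates the unit step away from the jump, so sums
`c₀ + ∑ cⱼ σ (wⱼ t + βⱼ)` approximate continuous functions of one variable. Composed with affine
maps they put every ridge function `g ∘ ℓ`, in particular every `exp ∘ ℓ`, in the closure of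
`𝒩₂`. The span of the `exp ∘ ℓ` is a point-separating subalgebra of `C(K, ℝ)`, so `𝒩₂` is dense
by Stone–Weierstrass. Density then climbs the layers: the output layer
`(Gⱼ) ↦ a₀ + ∑ aⱼ σ ∘ Gⱼ` is continuous on `C(K, ℝ)ᵐ`, so replacing the affine inner functions of
an `𝒩₂` net by nearby `𝒩ₖ₊₁` nets gives a nearby `𝒩ₖ₊₂` net. The vector-valued statement follows
coordinatewise in the sup norm.
-/

open Filter Topology

open Finset Set

namespace IsSquashing

variable {σ : ℝ → ℝ}

lemma nonneg (hσ : IsSquashing σ) (t : ℝ) : 0 ≤ σ t :=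
  le_of_tendsto hσ.2.2.1 (eventually_atBot.2 ⟨t, fun _ hs => hσ.1 hs⟩)

lemma le_one (hσ : IsSquashing σ) (t : ℝ) : σ t ≤ 1 :=
  ge_of_tendsto hσ.2.2.2 (eventually_atTop.2 ⟨t, fun _ hs => hσ.1 hs⟩)

lemma exists_scale_near_step (hσ : IsSquashing σ) {δ η : ℝ} (hδ : 0 < δ) (hη : 0 < η) :
    ∃ k, (∀ s, δ ≤ s → |σ (k * s) - 1| ≤ η) ∧ (∀ s, s ≤ -δ → |σ (k * s)| ≤ η) := by
  have hscale : Tendsto (fun k => k * δ) atTop atTop := tendsto_id.atTop_mul_const hδ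
  have htop : ∀ᶠ k in atTop, 1 - η < σ (k * δ) :=
    (hσ.2.2.2.comp hscale).eventually (lt_mem_nhds (by linarith))
  have hbot : ∀ᶠ k in atTop, σ (-(k * δ)) < η :=
    (hσ.2.2.1.comp (tendsto_neg_atTop_atBot.comp hscale)).eventually (gt_mem_nhds hη)
  obtain ⟨k, hk, hk₁, hk₂⟩ := ((eventually_gt_atTop 0).and (htop.and hbot)).exists
  refine ⟨k, fun s hs => ?_, fun s hs => ?_⟩
  · have := hσ.1 (mul_le_mul_of_nonneg_left hs hk.le)
    rw [abs_sub_le_iff]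
    constructor <;> linarith [hσ.le_one (k * s)]
  · have := hσ.1 (mul_le_mul_of_nonneg_left hs hk.le)
    rw [mul_neg] at this
    rw [abs_of_nonneg (hσ.nonneg _)]
    linarith

end IsSquashing

namespace Net

variable {σ : ℝ → ℝ} {n k : ℕ} {f g : (Fin n → ℝ) → ℝ}

lemma continuous (hσ : Continuous σ) (h : Net σ n k f) : Continuous f := by
  induction h with
  | affine a₀ a => fun_prop
  | comb k m F a₀ a hF ih =>
    exact continuous_const.add <|
      continuous_finsetSum _ fun j _ => continuous_const.mul (hσ.comp (ih j))

lemma not_zero : ¬ Net σ n 0 f := nofun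

lemma affine_comp (hf : Net σ n 1 f) (w β : ℝ) : Net σ n 1 (fun x => w * f x + β) := by
  cases hf with
  | affine a₀ a =>
    convert Net.affine (σ := σ) (w * a₀ + β) (fun i => w * a i) using 2 with x
    simp only [mul_add, Finset.mul_sum, mul_assoc]
    ring
  | comb _ m F a₀ a hF =>
    -- a `comb` in `𝒩₁` has no neurons, since `𝒩₀` is empty: it is a constant
    have : IsEmpty (Fin m) := ⟨fun j => (hF j).not_zero⟩
    simpa using Net.affine (σ := σ) (n := n) (w * a₀ + β) 0

lemma const (c : ℝ) : Net σ n (k + 1) (fun _ => c) := by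
  simpa using Net.comb (σ := σ) (n := n) k 0 Fin.elim0 c Fin.elim0 fun j => j.elim0

lemma add (hf : Net σ n (k + 2) f) (hg : Net σ n (k + 2) g) :
    Net σ n (k + 2) (fun x => f x + g x) := by
  cases hf with
  | comb _ m₁ F a₀ a hF =>
  cases hg with
  | comb _ m₂ G b₀ b hG =>
    convert Net.comb (k + 1) (m₁ + m₂) (Fin.append F G) (a₀ + b₀) (Fin.append a b)
      (Fin.addCases (by simpa using hF) (by simpa using hG)) using 2 with x
    simp only [Fin.sum_univ_add, Fin.append_left, Fin.append_right]
    ring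

lemma const_mul (c : ℝ) (hf : Net σ n (k + 2) f) : Net σ n (k + 2) (fun x => c * f x) := by
  cases hf with
  | comb _ m F a₀ a hF =>
    convert Net.comb (k + 1) m F (c * a₀) (fun j => c * a j) hF using 2 with x
    simp only [mul_add, Finset.mul_sum, mul_assoc]

end Net

lemma exists_nat_le_le_succ {x : ℝ} {N : ℕ} (hN : 0 < N) (hx₀ : 0 ≤ x) (hxN : x ≤ N) :
    ∃ i < N, (i : ℝ) ≤ x ∧ x ≤ i + 1 := by
  rcases lt_or_ge ⌊x⌋₊ N with hlt | hge
  · exact ⟨⌊x⌋₊, hlt, Nat.floor_le hx₀, (Nat.lt_floor_add_one x).le⟩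
  · refine ⟨N - 1, by omega, ?_, ?_⟩
    · have : ((N - 1 : ℕ) : ℝ) ≤ ⌊x⌋₊ := by exact_mod_cast (by omega : N - 1 ≤ ⌊x⌋₊)
      exact this.trans (Nat.floor_le hx₀)
    · rw [Nat.cast_sub hN, Nat.cast_one]
      linarith

lemma abs_staircase_sub_le {N i : ℕ} (hi : i < N) {y g : ℕ → ℝ} {η : ℝ}
    (hy : ∀ j < N, |y (j + 1) - y j| ≤ η)
    (hg : ∀ j, |g j - if j < i then 1 else 0| ≤ (N : ℝ)⁻¹ + if j = i then 1 else 0) :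
    |y 0 + ∑ j ∈ range N, (y (j + 1) - y j) * g j - y i| ≤ 2 * η := by
  have hstep : ∑ j ∈ range N, (y (j + 1) - y j) * (if j < i then 1 else 0) = y i - y 0 := by
    simp only [mul_ite, mul_one, mul_zero, ← sum_filter]
    rw [show (range N).filter (· < i) = range i by ext; simp; omega, sum_range_sub]
  have hsplit : y 0 + ∑ j ∈ range N, (y (j + 1) - y j) * g j - y i =
      ∑ j ∈ range N, (y (j + 1) - y j) * (g j - if j < i then 1 else 0) := by
    simp only [mul_sub, sum_sub_distrib, hstep]
    ring
  rw [hsplit]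
  calc |∑ j ∈ range N, (y (j + 1) - y j) * (g j - if j < i then 1 else 0)|
      ≤ ∑ j ∈ range N, η * ((N : ℝ)⁻¹ + if j = i then 1 else 0) := by
        refine (abs_sum_le_sum_abs _ _).trans (sum_le_sum fun j hj => ?_)
        rw [abs_mul]
        exact mul_le_mul (hy j (mem_range.1 hj)) (hg j) (abs_nonneg _)
          ((abs_nonneg _).trans (hy j (mem_range.1 hj)))
    _ = 2 * η := by
        rw [← mul_sum, sum_add_distrib, sum_ite_eq' _ _ (fun _ => (1 : ℝ)),
          if_pos (mem_range.2 hi)]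
        simp [(Nat.zero_lt_of_lt hi).ne']
        ring

variable {σ : ℝ → ℝ}

lemma IsSquashing.abs_sub_ite_le (hσ : IsSquashing σ) {k δ η s : ℝ} {i j : ℕ} (hη : 0 ≤ η)
    (hk₁ : ∀ s, δ ≤ s → |σ (k * s) - 1| ≤ η) (hk₀ : ∀ s, s ≤ -δ → |σ (k * s)| ≤ η)
    (hlt : j < i → δ ≤ s) (hgt : i < j → s ≤ -δ) :
    |σ (k * s) - if j < i then 1 else 0| ≤ η + if j = i then 1 else 0 := by
  rcases lt_trichotomy j i with hji | rfl | hij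
  · simpa [hji, hji.ne] using hk₁ s (hlt hji)
  · rw [if_neg (lt_irrefl j), if_pos rfl, sub_zero, abs_of_nonneg (hσ.nonneg _)]
    linarith [hσ.le_one (k * s)]
  · simpa [hij.not_gt, hij.ne'] using hk₀ s (hgt hij)

lemma ContinuousOn.exists_nat_forall_abs_sub_lt {f : ℝ → ℝ} {a b : ℝ}
    (hf : ContinuousOn f (Icc a b)) {η : ℝ} (hη : 0 < η) :
    ∃ N : ℕ, 0 < N ∧ ∀ s ∈ Icc a b, ∀ t ∈ Icc a b, |s - t| ≤ (b - a) / N → |f s - f t| < η := by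
  obtain ⟨δ, hδ, hfδ⟩ := Metric.uniformContinuousOn_iff.1
    (isCompact_Icc.uniformContinuousOn_of_continuous hf) η hη
  obtain ⟨N, hN⟩ := exists_nat_gt ((b - a) / δ)
  refine ⟨N + 1, N.succ_pos, fun s hs t ht hst => hfδ s hs t ht (hst.trans_lt ?_)⟩
  rw [div_lt_iff₀ (by positivity), mul_comm, ← div_lt_iff₀ hδ]
  push_cast
  linarith

/- The staircase `f a + ∑ⱼ (f xⱼ₊₁ - f xⱼ) H(t - xⱼ - h/2)` on the grid `xⱼ = a + j h` is close
to `f`, and `σ (k ·)` matches the Heaviside step `H` to within `1/N` except at the one jump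
near `t`, which costs at most one (small) step height. -/
lemma IsSquashing.exists_sum_near (hσ : IsSquashing σ) {f : ℝ → ℝ} {a b : ℝ}
    (hf : ContinuousOn f (Icc a b)) {ε : ℝ} (hε : 0 < ε) :
    ∃ (N : ℕ) (c₀ : ℝ) (c w β : Fin N → ℝ),
      ∀ t ∈ Icc a b, |c₀ + ∑ j, c j * σ (w j * t + β j) - f t| < ε := by
  rcases le_or_gt b a with hba | hab
  · refine ⟨0, f a, 0, 0, 0, fun t ht => ?_⟩
    simp [le_antisymm (ht.2.trans hba) ht.1, hε]
  obtain ⟨N, hN, hfN⟩ := hf.exists_nat_forall_abs_sub_lt (div_pos hε four_pos)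
  have hNpos : (0 : ℝ) < N := Nat.cast_pos.2 hN
  set h := (b - a) / N with h_def
  have hh : 0 < h := by positivity
  have hNh : N * h = b - a := by rw [h_def]; field_simp
  set x : ℕ → ℝ := fun j => a + j * h with x_def
  have hx : ∀ j ≤ N, x j ∈ Icc a b := fun j hj => by
    have : (j : ℝ) * h ≤ N * h := by gcongr
    constructor <;> simp only [x_def] <;> nlinarith
  have hc : ∀ j < N, |f (x (j + 1)) - f (x j)| ≤ ε / 4 := fun j hj =>
    (hfN _ (hx _ hj) _ (hx _ hj.le) (by simp [x_def, add_mul, abs_of_pos hh])).le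
  obtain ⟨k, hk₁, hk₀⟩ := hσ.exists_scale_near_step (half_pos hh) (inv_pos.2 hNpos)
  refine ⟨N, f a, fun j => f (x (j + 1)) - f (x j), fun _ => k, fun j => -(k * (x j + h / 2)),
    fun t ht => ?_⟩
  obtain ⟨i, hiN, hit, hti⟩ := exists_nat_le_le_succ hN (x := (t - a) / h)
    (div_nonneg (by linarith [ht.1]) hh.le) (by rw [div_le_iff₀ hh, hNh]; linarith [ht.2])
  rw [le_div_iff₀ hh] at hit
  rw [div_le_iff₀ hh] at hti
  have he : ∀ j, |σ (k * (t - x j - h / 2)) - if j < i then 1 else 0| ≤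
      (N : ℝ)⁻¹ + if j = i then 1 else 0 := fun j =>
    hσ.abs_sub_ite_le (by positivity) hk₁ hk₀
      (fun hji => by
        have : (j : ℝ) + 1 ≤ i := by exact_mod_cast hji
        simp only [x_def]; nlinarith)
      (fun hij => by
        have : (i : ℝ) + 1 ≤ j := by exact_mod_cast hij
        simp only [x_def]; nlinarith)
  have hstair := abs_staircase_sub_le hiN (y := fun j => f (x j)) hc he
  have harg : ∀ j : ℕ, k * t + -(k * (x j + h / 2)) = k * (t - x j - h / 2) := fun j => by ring
  rw [show x 0 = a by simp [x_def]] at hstair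
  rw [Fin.sum_univ_eq_sum_range (fun j => (f (x (j + 1)) - f (x j)) *
    σ (k * t + -(k * (x j + h / 2))))]
  simp only [harg]
  have hti' : |f (x i) - f t| < ε / 4 :=
    hfN _ (hx i hiN.le) _ ht <| by
      rw [abs_sub_comm, abs_le]; simp only [x_def]; constructor <;> linarith
  linarith [abs_sub_le (f a + ∑ j ∈ range N, (f (x (j + 1)) - f (x j)) * σ (k * (t - x j - h / 2)))
    (f (x i)) (f t)]

section NetSet

variable (σ) {n : ℕ} (K : Set (Fin n → ℝ))

def netSet (k : ℕ) : Set C(K, ℝ) := {g | ∃ f, Net σ n k f ∧ ∀ x : K, g x = f x}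

def netSubmodule (k : ℕ) : Submodule ℝ C(K, ℝ) where
  carrier := netSet σ K (k + 2)
  zero_mem' := ⟨fun _ => 0, Net.const 0, fun _ => rfl⟩
  add_mem' := fun ⟨f, hf, hfg⟩ ⟨g, hg, hgg⟩ =>
    ⟨_, hf.add hg, fun x => by simp [hfg, hgg]⟩
  smul_mem' := fun c _ ⟨f, hf, hfg⟩ => ⟨_, hf.const_mul c, fun x => by simp [hfg]⟩

variable {σ K}

lemma Net.restrict_mem_netSet (hσ : Continuous σ) {k : ℕ} {f : (Fin n → ℝ) → ℝ}
    (hf : Net σ n k f) : (ContinuousMap.mk f (hf.continuous hσ)).restrict K ∈ netSet σ K k :=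
  ⟨f, hf, fun _ => rfl⟩

lemma netSet_succ_subset_closure (hσ : Continuous σ) {k l : ℕ}
    (h : netSet σ K (k + 1) ⊆ closure (netSet σ K (l + 1))) :
    netSet σ K (k + 2) ⊆ closure (netSet σ K (l + 2)) := by
  rintro g ⟨f, hf, hg⟩
  cases hf with
  | comb _ m F a₀ a hF =>
    let σc : C(ℝ, ℝ) := ⟨σ, hσ⟩
    let Φ : (Fin m → C(K, ℝ)) → C(K, ℝ) := fun G =>
      ContinuousMap.const K a₀ + ∑ j, a j • σc.comp (G j)
    have hΦ : Continuous Φ := continuous_const.add <| continuous_finsetSum _ fun j _ =>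
      ((ContinuousMap.continuous_postcomp σc).comp (continuous_apply j)).const_smul (a j)
    have hΦnet : Φ '' univ.pi (fun _ => netSet σ K (l + 1)) ⊆ netSet σ K (l + 2) := by
      rintro _ ⟨G, hG, rfl⟩
      choose f hf hGf using fun j => hG j (mem_univ j)
      exact ⟨_, Net.comb (l + 1) m f a₀ a hf, fun x => by simp [Φ, σc, hGf]⟩
    have hF' : (fun j => ContinuousMap.restrict K ⟨F j, (hF j).continuous hσ⟩) ∈
        closure (univ.pi fun _ => netSet σ K (l + 1)) := by
      rw [closure_pi_set]
      exact fun j _ => h ((hF j).restrict_mem_netSet hσ)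
    have hgΦ : g = Φ fun j => ContinuousMap.restrict K ⟨F j, (hF j).continuous hσ⟩ := by
      ext x
      simp [Φ, σc, hg]
    rw [hgΦ]
    exact closure_mono hΦnet (image_closure_subset_closure_image hΦ ⟨_, hF', rfl⟩)

lemma comp_mem_closure_netSet [CompactSpace K] (hσ : IsSquashing σ) (g : C(ℝ, ℝ)) {u : C(K, ℝ)}
    (hu : u ∈ netSet σ K 1) : g.comp u ∈ closure (netSet σ K 2) := by
  obtain ⟨ℓ, hℓ, hu⟩ := hu
  refine Metric.mem_closure_iff.2 fun ε hε => ?_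
  obtain ⟨N, c₀, c, w, β, hcwβ⟩ :=
    hσ.exists_sum_near (a := -‖u‖) (b := ‖u‖) g.continuous.continuousOn hε
  refine ⟨⟨fun x => c₀ + ∑ j, c j * σ (w j * u x + β j), by have := hσ.2.1; fun_prop⟩,
    ⟨_, Net.comb 1 N _ c₀ c fun j => hℓ.affine_comp (w j) (β j), fun x => by simp [hu]⟩, ?_⟩
  rw [dist_comm, ContinuousMap.dist_lt_iff hε]
  exact fun x => hcwβ (u x) (abs_le.1 (u.norm_coe_le_norm x))

variable (K) in
def expAffineSubmonoid : Submonoid C(K, ℝ) where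
  carrier := {e | ∃ (ℓ₀ : ℝ) (ℓ : Fin n → ℝ), ∀ x : K, e x = Real.exp (ℓ₀ + ∑ i, ℓ i * x.1 i)}
  mul_mem' := by
    rintro _ _ ⟨ℓ₀, ℓ, he⟩ ⟨ℓ₀', ℓ', he'⟩
    refine ⟨ℓ₀ + ℓ₀', ℓ + ℓ', fun x => ?_⟩
    simp only [ContinuousMap.mul_apply, he, he', ← Real.exp_add, Pi.add_apply, add_mul,
      sum_add_distrib]
    ring_nf
  one_mem' := ⟨0, 0, fun x => by simp⟩

lemma expAffineSubmonoid_subset_closure_netSet [CompactSpace K] (hσ : IsSquashing σ) :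
    (expAffineSubmonoid K : Set C(K, ℝ)) ⊆ closure (netSet σ K 2) := by
  rintro e ⟨ℓ₀, ℓ, he⟩
  obtain rfl : e = ContinuousMap.comp ⟨Real.exp, Real.continuous_exp⟩
      ((ContinuousMap.mk _ ((Net.affine ℓ₀ ℓ).continuous hσ.2.1)).restrict K) :=
    ContinuousMap.ext he
  exact comp_mem_closure_netSet hσ _ ((Net.affine ℓ₀ ℓ).restrict_mem_netSet hσ.2.1)

lemma separatesPoints_adjoin_expAffineSubmonoid :
    (Algebra.adjoin ℝ (expAffineSubmonoid K : Set C(K, ℝ))).SeparatesPoints := by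
  intro x y hxy
  obtain ⟨i, hi⟩ : ∃ i, x.1 i ≠ y.1 i := by
    by_contra! h
    exact hxy (Subtype.ext (funext h))
  have he : (ContinuousMap.mk (fun x : Fin n → ℝ => Real.exp (x i)) (by fun_prop)).restrict K ∈
      expAffineSubmonoid K :=
    ⟨0, Pi.single i 1, fun x => by simp [Pi.single_apply]⟩
  exact ⟨_, ⟨_, Algebra.subset_adjoin he, rfl⟩, by simpa using hi⟩

lemma dense_netSet_two [CompactSpace K] (hσ : IsSquashing σ) : Dense (netSet σ K 2) := by
  let V := (netSubmodule σ K 0).topologicalClosure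
  have hV : (V : Set C(K, ℝ)) = closure (netSet σ K 2) := Submodule.topologicalClosure_coe _
  let A := Algebra.adjoin ℝ (expAffineSubmonoid K : Set C(K, ℝ))
  have hAV : Subalgebra.toSubmodule A ≤ V := by
    rw [Algebra.adjoin_eq_span, Submonoid.closure_eq, Submodule.span_le, hV]
    exact expAffineSubmonoid_subset_closure_netSet hσ
  have hA : A.topologicalClosure = ⊤ :=
    ContinuousMap.subalgebra_topologicalClosure_eq_top_of_separatesPoints A
      separatesPoints_adjoin_expAffineSubmonoid
  rw [dense_iff_closure_eq, ← hV, eq_univ_iff_forall]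
  intro g
  have hg : g ∈ closure (A : Set C(K, ℝ)) := by
    rw [← Subalgebra.topologicalClosure_coe, hA]; trivial
  exact closure_minimal hAV (Submodule.isClosed_topologicalClosure _) hg

lemma dense_netSet [CompactSpace K] (hσ : IsSquashing σ) (k : ℕ) :
    Dense (netSet σ K (k + 2)) := by
  induction k with
  | zero => exact dense_netSet_two hσ
  | succ k ih =>
    refine (Dense.mono (netSet_succ_subset_closure hσ.2.1 ?_) (dense_netSet_two hσ)).of_closure
    simp [ih.closure_eq]

lemma exists_net_near_of_dense [CompactSpace K] {k : ℕ} (hk : Dense (netSet σ K k))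
    {g : (Fin n → ℝ) → ℝ} (hg : ContinuousOn g K) {ε : ℝ} (hε : 0 < ε) :
    ∃ f, Net σ n k f ∧ ∀ x ∈ K, |f x - g x| < ε := by
  obtain ⟨_, ⟨f, hf, hff⟩, hdist⟩ := hk.exists_dist_lt ⟨K.domRestrict g, hg.domRestrict⟩ hε
  refine ⟨f, hf, fun x hx => ?_⟩
  have := (ContinuousMap.dist_lt_iff hε).1 hdist ⟨x, hx⟩
  rwa [hff, Real.dist_eq, abs_sub_comm] at this

end NetSet

theorem stmt14 (σ : ℝ → ℝ) (hσ : IsSquashing σ)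
    (n m : ℕ) (K : Set (Fin n → ℝ)) (hK : IsCompact K)
    (T : (Fin n → ℝ) → (Fin m → ℝ)) (hT : ContinuousOn T K)
    (ε : ℝ) (hε : 0 < ε) :
    ∃ f : Fin m → ((Fin n → ℝ) → ℝ), (∀ i, Net σ n 4 (f i)) ∧
      ∀ x ∈ K, ‖(fun i => f i x) - T x‖ < ε := by
  have : CompactSpace K := isCompact_iff_compactSpace.mp hK
  choose f hf hfT using fun i => exists_net_near_of_dense (dense_netSet hσ 2)
    ((continuous_apply i).comp_continuousOn hT) hε
  exact ⟨f, hf, fun x hx => (pi_norm_lt_iff hε).2 fun i => hfT i x hx⟩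
end
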